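/- arXiv:1608.06976 — 2 statements merged into one kernel-verified Lean document; each statement's English description precedes it below -/
import Mathlib

section
/- Let α ∈ ℂ ∖ {−1,−2,…} and let u ∈ ℂ be neither 0 nor a zero of 𝕀_{α+1}. The Apostol–Euler–Dunkl polynomials satisfy, for every n ≥ 0 and all x ∈ ℂ, the recurrence xⁿ = (2(1+α)γ_{n,α}/(u 𝕀_{α+1}(u))) ∑_{j=0}^{n} (𝔈_{j,α,u}(x)/(γ_{j,α}(n−j)!)) · 𝕀_α^{(n−j+1)}(u), where 𝕀_α^{(m)} denotes the m-th derivative of 𝕀_α. Moreover Λ_α(𝔈_{n,α,u}) = (n + (α+1/2)(1−(−1)ⁿ)) 𝔈_{n−1,α,u} for every n ≥ 1. -/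
open Complex Polynomial Finset Filter Topology

/-- `γ_{n,α}` from the Dunkl setting: `γ_{2k,α} = 2^{2k} k! (α+1)_k`,
`γ_{2k+1,α} = 2^{2k+1} k! (α+1)_{k+1}`. -/
noncomputable def gamDunkl (α : ℂ) (n : ℕ) : ℂ :=
  if n % 2 = 0 then
    (2:ℂ)^n * (Nat.factorial (n/2) : ℂ) * (ascPochhammer ℂ (n/2)).eval (α+1)
  else
    (2:ℂ)^n * (Nat.factorial (n/2) : ℂ) * (ascPochhammer ℂ (n/2+1)).eval (α+1)

/-- `𝕀_α(z) = Γ(α+1) ∑_{n≥0} (z/2)^{2n} / (n! Γ(n+α+1))`. -/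
noncomputable def modI (α z : ℂ) : ℂ :=
  Complex.Gamma (α+1) *
    ∑' n : ℕ, (z/2)^(2*n) / ((Nat.factorial n : ℂ) * Complex.Gamma ((n:ℂ) + α + 1))

/-- The Dunkl kernel `E_α(z) = 𝕀_α(z) + (z/(2(α+1))) 𝕀_{α+1}(z)`. -/
noncomputable def dunklKer (α z : ℂ) : ℂ :=
  modI α z + z / (2*(α+1)) * modI (α+1) z

/-- The Dunkl operator `Λ_α` acting on polynomials. -/
noncomputable def dunklPoly (α : ℂ) (p : Polynomial ℂ) : Polynomial ℂ :=
  Polynomial.derivative p + Polynomial.C ((2*α+1)/2) * (p - p.comp (-Polynomial.X)).divX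

/-!
Multiplying the generating identity by its denominator
`(t + u) 𝕀_{α+1}(t + u) = 2(α+1) 𝕀_α'(t + u) = ∑ₘ cₘ tᵐ`, `cₘ = 2(α+1) 𝕀_α^{(m+1)}(u)/m!`, and
comparing Taylor coefficients with `E_α(z) = ∑ zⁿ/γ_{n,α}` gives the triangular system
`∑_{j ≤ n} c_{n-j} 𝔈_j(x)/γ_j = c₀ xⁿ/γ_n` with `c₀ = u 𝕀_{α+1}(u) ≠ 0`, which is the recurrence.
Since `Λ_α` maps `xⁿ⁺¹/γ_{n+1}` to `xⁿ/γ_n` and kills constants, applying it to the system shows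
that `Λ_α(𝔈_{j+1}/γ_{j+1})` solves the same triangular system as `𝔈_j/γ_j`, hence equals it.
-/

open scoped Nat ENNReal

section Coefficients

variable {β : ℂ}

lemma ascPochhammer_eval_ne_zero {z : ℂ} (hz : ∀ k : ℕ, z ≠ -k) (n : ℕ) :
    (ascPochhammer ℂ n).eval z ≠ 0 := by
  rw [Ne, ascPochhammer_eval_eq_zero_iff]
  rintro ⟨k, -, hk⟩
  exact hz k (by rw [hk, neg_neg])

lemma add_one_ne_neg_natCast (hβ : ∀ k : ℕ, β + 1 ≠ -k) (k : ℕ) : β + 1 + 1 ≠ -k := by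
  have := hβ (k + 1)
  push_cast at this
  contrapose! this
  linear_combination this

lemma gamDunkl_two_mul (β : ℂ) (k : ℕ) :
    gamDunkl β (2 * k) = 2 ^ (2 * k) * k ! * (ascPochhammer ℂ k).eval (β + 1) := by
  simp [gamDunkl]

lemma gamDunkl_two_mul_add_one (β : ℂ) (k : ℕ) :
    gamDunkl β (2 * k + 1) = 2 ^ (2 * k + 1) * k ! * (ascPochhammer ℂ (k + 1)).eval (β + 1) := by
  simp [gamDunkl, Nat.add_mod, Nat.add_div]

lemma gamDunkl_zero (β : ℂ) : gamDunkl β 0 = 1 := by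
  simp [gamDunkl]

lemma gamDunkl_ne_zero (hβ : ∀ k : ℕ, β + 1 ≠ -k) (n : ℕ) : gamDunkl β n ≠ 0 := by
  obtain ⟨k, rfl | rfl⟩ := Nat.even_or_odd' n
  · simp [gamDunkl_two_mul, ascPochhammer_eval_ne_zero hβ, Nat.factorial_ne_zero]
  · simp [gamDunkl_two_mul_add_one, ascPochhammer_eval_ne_zero hβ, Nat.factorial_ne_zero]

lemma gamDunkl_succ (β : ℂ) (n : ℕ) :
    gamDunkl β (n + 1) =
      (((n + 1 : ℕ) : ℂ) + (β + 1 / 2) * (1 - (-1) ^ (n + 1))) * gamDunkl β n := by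
  obtain ⟨k, rfl | rfl⟩ := Nat.even_or_odd' n
  · rw [gamDunkl_two_mul_add_one, gamDunkl_two_mul, ascPochhammer_succ_eval,
      Odd.neg_one_pow ⟨k, rfl⟩]
    push_cast
    ring
  · rw [Even.neg_one_pow ⟨k + 1, by ring⟩, show 2 * k + 1 + 1 = 2 * (k + 1) by ring,
      gamDunkl_two_mul, gamDunkl_two_mul_add_one, Nat.factorial_succ]
    push_cast
    ring

lemma gamDunkl_two_mul_add_one_eq (β : ℂ) (k : ℕ) :
    gamDunkl β (2 * k + 1) = 2 * (β + 1) * gamDunkl (β + 1) (2 * k) := by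
  rw [gamDunkl_two_mul_add_one, gamDunkl_two_mul, ascPochhammer_succ_left]
  simp only [eval_mul, eval_X, eval_comp, eval_add, eval_one]
  ring

lemma gamDunkl_two_mul_succ (β : ℂ) (k : ℕ) :
    gamDunkl β (2 * (k + 1)) = 4 * (k + 1) * (β + 1 + k) * gamDunkl β (2 * k) := by
  rw [gamDunkl_two_mul, gamDunkl_two_mul, ascPochhammer_succ_eval, Nat.factorial_succ]
  push_cast
  ring

lemma summable_pow_two_mul_div_gamDunkl (hβ : ∀ k : ℕ, β + 1 ≠ -k) (z : ℂ) :
    Summable fun k : ℕ => z ^ (2 * k) / gamDunkl β (2 * k) := by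
  refine summable_of_ratio_norm_eventually_le (r := 1 / 2) (by norm_num) ?_
  filter_upwards [tendsto_natCast_atTop_atTop.eventually_ge_atTop (‖β + 1‖ + ‖z‖ ^ 2 + 1)]
    with k hk
  have hratio : z ^ (2 * (k + 1)) / gamDunkl β (2 * (k + 1))
      = z ^ 2 / (4 * ((k + 1 : ℕ) : ℂ) * (β + 1 + k)) * (z ^ (2 * k) / gamDunkl β (2 * k)) := by
    have := gamDunkl_ne_zero hβ (2 * k)
    have : β + 1 + k ≠ 0 := fun h => hβ k (by linear_combination h)
    rw [gamDunkl_two_mul_succ, mul_add, pow_add]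
    field_simp
    push_cast
    ring
  have hbig : ‖z‖ ^ 2 + 1 ≤ ‖β + 1 + k‖ := by
    have h := norm_add_le (β + 1 + k) (-(β + 1))
    rw [norm_neg, show β + 1 + k + -(β + 1) = (k : ℂ) by ring, Complex.norm_natCast] at h
    linarith
  have hpos : 0 < ‖β + 1 + k‖ := by nlinarith [sq_nonneg ‖z‖]
  rw [hratio, norm_mul]
  gcongr
  rw [norm_div, norm_pow, norm_mul, norm_mul, Complex.norm_natCast, Complex.norm_ofNat,
    div_le_iff₀ (by positivity)]
  push_cast
  nlinarith [norm_nonneg (β + 1 + k), (k.cast_nonneg : (0 : ℝ) ≤ k)]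

lemma hasSum_modI (hβ : ∀ k : ℕ, β + 1 ≠ -k) (z : ℂ) :
    HasSum (fun k : ℕ => z ^ (2 * k) / gamDunkl β (2 * k)) (modI β z) := by
  have hΓ : Gamma (β + 1) ≠ 0 := Gamma_ne_zero hβ
  have hterm (k : ℕ) : (z / 2) ^ (2 * k) / ((k ! : ℂ) * Gamma (k + β + 1))
      = (Gamma (β + 1))⁻¹ * (z ^ (2 * k) / gamDunkl β (2 * k)) := by
    have hG : Gamma (k + β + 1) = (ascPochhammer ℂ k).eval (β + 1) * Gamma (β + 1) := by
      rw [← Gamma_add_nat_div_Gamma_eq _ hβ, div_mul_cancel₀ _ hΓ,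
        show (k : ℂ) + β + 1 = β + 1 + k by ring]
    have := ascPochhammer_eval_ne_zero hβ k
    rw [hG, gamDunkl_two_mul, div_pow, pow_mul 2 2 k]
    field_simp
  rw [modI, tsum_congr hterm, tsum_mul_left, ← mul_assoc, mul_inv_cancel₀ hΓ, one_mul]
  exact (summable_pow_two_mul_div_gamDunkl hβ z).hasSum

lemma hasSum_odd_modI (hβ : ∀ k : ℕ, β + 1 ≠ -k) (z : ℂ) :
    HasSum (fun k : ℕ => z ^ (2 * k + 1) / gamDunkl β (2 * k + 1))
      (z / (2 * (β + 1)) * modI (β + 1) z) := by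
  have hβ1 : β + 1 ≠ 0 := by simpa using hβ 0
  refine ((hasSum_modI (add_one_ne_neg_natCast hβ) z).mul_left (z / (2 * (β + 1)))).congr_fun
    fun k => ?_
  have := gamDunkl_ne_zero (add_one_ne_neg_natCast hβ) (2 * k)
  rw [gamDunkl_two_mul_add_one_eq, pow_succ]
  field_simp

lemma hasSum_dunklKer (hβ : ∀ k : ℕ, β + 1 ≠ -k) (z : ℂ) :
    HasSum (fun n : ℕ => z ^ n / gamDunkl β n) (dunklKer β z) := by
  rw [dunklKer]
  exact HasSum.even_add_odd (f := fun n : ℕ => z ^ n / gamDunkl β n) (hasSum_modI hβ z)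
    (hasSum_odd_modI hβ z)

end Coefficients

section PowerSeries

variable {f : ℂ → ℂ} {c : ℕ → ℂ}

lemma hasFPowerSeriesOnBall_ofScalars {r : ℝ≥0∞} (hr : 0 < r)
    (hf : ∀ t ∈ Metric.eball (0 : ℂ) r, HasSum (fun n => c n * t ^ n) (f t)) :
    HasFPowerSeriesOnBall f (FormalMultilinearSeries.ofScalars ℂ c) 0 r where
  r_le := ENNReal.le_of_forall_nnreal_lt fun ρ hρ => by
    refine FormalMultilinearSeries.le_radius_of_summable _ ?_
    have := (hf ρ (by rwa [Metric.mem_eball, edist_zero_right, ← ofReal_norm, Complex.norm_real,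
      Real.norm_of_nonneg ρ.coe_nonneg, ENNReal.ofReal_coe_nnreal])).summable.norm
    simpa [FormalMultilinearSeries.ofScalars_norm] using this
  r_pos := hr
  hasSum hy := by
    simpa only [zero_add, FormalMultilinearSeries.ofScalars_apply_eq, smul_eq_mul] using hf _ hy

lemma eq_of_eventually_hasSum_mul_pow {a b : ℕ → ℂ}
    (ha : ∀ᶠ t in 𝓝 0, HasSum (fun n => a n * t ^ n) (f t))
    (hb : ∀ᶠ t in 𝓝 0, HasSum (fun n => b n * t ^ n) (f t)) : a = b := by
  obtain ⟨r, hr, hab⟩ := Metric.nhds_basis_eball.eventually_iff.1 (ha.and hb)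
  exact FormalMultilinearSeries.ofScalars_series_injective ℂ ℂ
    ((hasFPowerSeriesOnBall_ofScalars hr fun t ht => (hab ht).1).hasFPowerSeriesAt
      |>.eq_formalMultilinearSeries
        (hasFPowerSeriesOnBall_ofScalars hr fun t ht => (hab ht).2).hasFPowerSeriesAt)

lemma differentiable_of_hasSum_mul_pow (hf : ∀ z, HasSum (fun n => c n * z ^ n) (f z)) :
    Differentiable ℂ f := by
  have := (hasFPowerSeriesOnBall_ofScalars ENNReal.zero_lt_top fun t _ => hf t).differentiableOn
  rwa [Metric.eball_top, differentiableOn_univ] at this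

lemma hasSum_deriv_of_hasSum_mul_pow (hf : ∀ z, HasSum (fun n => c n * z ^ n) (f z)) (z : ℂ) :
    HasSum (fun n : ℕ => (n + 1) * c (n + 1) * z ^ n) (deriv f z) := by
  have hdiff := differentiable_of_hasSum_mul_pow hf
  have hcoeff (n : ℕ) : iteratedDeriv n f 0 = n ! * c n := by
    have := congrFun (FormalMultilinearSeries.ofScalars_series_injective ℂ ℂ
      ((hdiff.analyticAt 0).hasFPowerSeriesAt.eq_formalMultilinearSeries
        (hasFPowerSeriesOnBall_ofScalars ENNReal.zero_lt_top fun t _ => hf t).hasFPowerSeriesAt)) n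
    rw [div_eq_iff (Nat.cast_ne_zero.2 n.factorial_ne_zero)] at this
    rw [this, mul_comm]
  have hdiff' : Differentiable ℂ (deriv f) := fun w => (hdiff.analyticAt w).deriv.differentiableAt
  refine (Complex.hasSum_taylorSeries_of_entire hdiff' 0 z).congr_fun fun n => ?_
  rw [← iteratedDeriv_succ', hcoeff, sub_zero, smul_eq_mul, smul_eq_mul, Nat.factorial_succ]
  have := Nat.cast_ne_zero (R := ℂ) |>.2 n.factorial_ne_zero
  push_cast
  field_simp

lemma sum_range_mul_eq_of_eventually_hasSum_div {a d b : ℕ → ℂ} {g D : ℂ → ℂ}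
    (hD : ∀ᶠ t in 𝓝 0, D t ≠ 0)
    (ha : ∀ᶠ t in 𝓝 0, HasSum (fun n => a n * t ^ n) (g t / D t))
    (hd : ∀ t, HasSum (fun n => d n * t ^ n) (D t))
    (hb : ∀ᶠ t in 𝓝 0, HasSum (fun n => b n * t ^ n) (g t)) (n : ℕ) :
    ∑ j ∈ range (n + 1), a j * d (n - j) = b n := by
  refine congrFun
    (eq_of_eventually_hasSum_mul_pow (a := fun m => ∑ j ∈ range (m + 1), a j * d (m - j)) ?_ hb) n
  filter_upwards [hD, ha] with t hDt hat
  have := hasSum_sum_range_mul_of_summable_norm hat.summable.norm (hd t).summable.norm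
  rw [hat.tsum_eq, (hd t).tsum_eq, div_mul_cancel₀ _ hDt] at this
  refine this.congr_fun fun m => ?_
  rw [sum_mul]
  refine sum_congr rfl fun j hj => ?_
  rw [← Nat.add_sub_cancel' (mem_range_succ_iff.1 hj), pow_add, Nat.add_sub_cancel_left]
  ring

end PowerSeries

section ModI

variable {β : ℂ}

lemma hasSum_modI_mul_pow (hβ : ∀ k : ℕ, β + 1 ≠ -k) (z : ℂ) :
    HasSum (fun n : ℕ => (if Even n then (gamDunkl β n)⁻¹ else 0) * z ^ n) (modI β z) := by
  rw [← add_zero (modI β z)]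
  refine HasSum.even_add_odd ?_ ?_
  · simpa [div_eq_inv_mul] using hasSum_modI hβ z
  · simp

lemma differentiable_modI (hβ : ∀ k : ℕ, β + 1 ≠ -k) : Differentiable ℂ (modI β) :=
  differentiable_of_hasSum_mul_pow (hasSum_modI_mul_pow hβ)

lemma deriv_modI (hβ : ∀ k : ℕ, β + 1 ≠ -k) (z : ℂ) :
    deriv (modI β) z = z / (2 * (β + 1)) * modI (β + 1) z := by
  refine (hasSum_deriv_of_hasSum_mul_pow (hasSum_modI_mul_pow hβ) z).unique ?_
  rw [← zero_add (_ * modI (β + 1) z)]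
  refine HasSum.even_add_odd ?_ ?_
  · simp
  · refine (hasSum_odd_modI hβ z).congr_fun fun k => ?_
    have hγ := gamDunkl_ne_zero hβ (2 * k + 1)
    have hk : (2 * k + 1 + 1 : ℂ) ≠ 0 := by exact_mod_cast (2 * k + 1).succ_ne_zero
    rw [if_pos (by simp [Nat.even_add_one]), gamDunkl_succ, Even.neg_one_pow ⟨k + 1, by ring⟩]
    push_cast
    rw [sub_self, mul_zero, add_zero]
    field_simp

/-- `(t + u) 𝕀_{β+1}(t + u) = 2(β+1) 𝕀_β'(t + u)`, expanded in Taylor series at `u`. -/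
lemma hasSum_iteratedDeriv_modI (hβ : ∀ k : ℕ, β + 1 ≠ -k) (u t : ℂ) :
    HasSum (fun m : ℕ => 2 * (β + 1) * iteratedDeriv (m + 1) (modI β) u / m ! * t ^ m)
      ((t + u) * modI (β + 1) (t + u)) := by
  have hβ1 : β + 1 ≠ 0 := by simpa using hβ 0
  have hd : Differentiable ℂ (deriv (modI β)) := fun w =>
    ((differentiable_modI hβ).analyticAt w).deriv.differentiableAt
  have h := (Complex.hasSum_taylorSeries_of_entire hd u (t + u)).mul_left (2 * (β + 1))
  rw [deriv_modI hβ, ← mul_assoc, mul_div_cancel₀ _ (mul_ne_zero two_ne_zero hβ1)] at h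
  refine h.congr_fun fun m => ?_
  rw [iteratedDeriv_succ', add_sub_cancel_right, smul_eq_mul, smul_eq_mul]
  ring

end ModI

lemma sum_range_eval_div_gamDunkl_mul_iteratedDeriv {α u : ℂ} (hα : ∀ k : ℕ, α + 1 ≠ -k)
    (hu0 : u ≠ 0) (hu : modI (α + 1) u ≠ 0) {E : ℕ → ℂ[X]}
    (hE : ∀ x : ℂ, ∃ r > 0, ∀ t : ℂ, ‖t‖ < r →
      HasSum (fun n : ℕ => (E n).eval x * t ^ n / gamDunkl α n)
        (u * modI (α + 1) u * dunklKer α (x * t) / ((t + u) * modI (α + 1) (t + u))))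
    (x : ℂ) (n : ℕ) :
    ∑ j ∈ range (n + 1), (E j).eval x / gamDunkl α j *
        (2 * (α + 1) * iteratedDeriv (n - j + 1) (modI α) u / (n - j)!)
      = u * modI (α + 1) u * x ^ n / gamDunkl α n := by
  have hD : ContinuousAt (fun t => (t + u) * modI (α + 1) (t + u)) 0 := by
    have := (differentiable_modI (add_one_ne_neg_natCast hα)).continuous
    fun_prop
  refine sum_range_mul_eq_of_eventually_hasSum_div (a := fun j => (E j).eval x / gamDunkl α j)
    (b := fun n => u * modI (α + 1) u * x ^ n / gamDunkl α n)
    (g := fun t => u * modI (α + 1) u * dunklKer α (x * t))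
    (hD.eventually_ne (by simpa using mul_ne_zero hu0 hu)) ?_ (hasSum_iteratedDeriv_modI hα u)
    (.of_forall fun t => ?_) n
  · obtain ⟨r, hr, hEr⟩ := hE x
    filter_upwards [Metric.ball_mem_nhds 0 hr] with t ht
    refine (hEr t (by simpa using ht)).congr_fun fun j => ?_
    ring
  · refine ((hasSum_dunklKer hα (x * t)).mul_left (u * modI (α + 1) u)).congr_fun fun j => ?_
    ring

theorem eq_of_sum_range_smul_eq {K M : Type*} [Field K] [AddCommGroup M] [Module K M]
    {c : ℕ → K} (hc : c 0 ≠ 0) {F G : ℕ → M}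
    (h : ∀ n, ∑ j ∈ range (n + 1), c (n - j) • F j = ∑ j ∈ range (n + 1), c (n - j) • G j) :
    F = G := by
  funext n
  induction n using Nat.strong_induction_on with
  | _ n ih =>
    have hn := h n
    rw [sum_range_succ, sum_range_succ, Nat.sub_self,
      sum_congr rfl fun j hj => by rw [ih j (mem_range.1 hj)]] at hn
    exact smul_right_injective M hc (add_left_cancel hn)

section Dunkl

variable {α : ℂ}

noncomputable def dunklPolyₗ (α : ℂ) : ℂ[X] →ₗ[ℂ] ℂ[X] where
  toFun := dunklPoly α
  map_add' p q := by
    rw [dunklPoly, dunklPoly, dunklPoly, derivative_add, add_comp,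
      show p + q - (p.comp (-X) + q.comp (-X)) = (p - p.comp (-X)) + (q - q.comp (-X)) by ring,
      divX_add]
    ring
  map_smul' a p := by
    simp only [dunklPoly, smul_eq_C_mul, derivative_C_mul, mul_comp, C_comp, RingHom.id_apply,
      ← mul_sub, divX_C_mul]
    ring

lemma dunklPolyₗ_apply (p : ℂ[X]) : dunklPolyₗ α p = dunklPoly α p := rfl

lemma dunklPoly_C (a : ℂ) : dunklPoly α (C a) = 0 := by
  simp [dunklPoly]

lemma dunklPoly_X_pow_succ (n : ℕ) :
    dunklPoly α (X ^ (n + 1)) =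
      C (((n + 1 : ℕ) : ℂ) + (α + 1 / 2) * (1 - (-1) ^ (n + 1))) * X ^ n := by
  rw [dunklPoly, derivative_X_pow, pow_comp, X_comp, neg_pow, ← C_1, ← C_neg, ← C_pow,
    ← one_sub_mul, ← C_1, ← C_sub, divX_C_mul, divX_X_pow, if_neg n.succ_ne_zero,
    Nat.add_sub_cancel, ← mul_assoc, ← C_mul, ← add_mul, ← C_add]
  congr 2
  ring

lemma dunklPoly_inv_gamDunkl_smul_X_pow_succ (hα : ∀ k : ℕ, α + 1 ≠ -k) (n : ℕ) :
    dunklPoly α ((gamDunkl α (n + 1))⁻¹ • X ^ (n + 1)) = (gamDunkl α n)⁻¹ • X ^ n := by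
  have hγ := gamDunkl_ne_zero hα (n + 1)
  rw [gamDunkl_succ] at hγ ⊢
  rw [← dunklPolyₗ_apply, map_smul, dunklPolyₗ_apply, dunklPoly_X_pow_succ, smul_eq_C_mul,
    smul_eq_C_mul, ← mul_assoc, ← C_mul]
  congr 2
  rw [mul_inv_rev, mul_assoc, inv_mul_cancel₀ (left_ne_zero_of_mul hγ), mul_one]

/-- As `Λ_α(xⁿ⁺¹/γ_{n+1}) = xⁿ/γ_n` and `F₀` is constant, `j ↦ Λ_α F_{j+1}` solves the same
triangular system as `F`. -/
theorem dunklPoly_succ_eq_of_sum_range_smul (hα : ∀ k : ℕ, α + 1 ≠ -k) {c : ℕ → ℂ}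
    (hc : c 0 ≠ 0) {s : ℂ} {F : ℕ → ℂ[X]}
    (hF : ∀ n, ∑ j ∈ range (n + 1), c (n - j) • F j = s • (gamDunkl α n)⁻¹ • X ^ n) (n : ℕ) :
    dunklPoly α (F (n + 1)) = F n := by
  have hF0 : dunklPoly α (F 0) = 0 := by
    have h := hF 0
    rw [sum_range_one, gamDunkl_zero, pow_zero, inv_one, one_smul, ← eq_inv_smul_iff₀ hc,
      smul_smul, smul_eq_C_mul, mul_one] at h
    rw [h, dunklPoly_C]
  refine congrFun (eq_of_sum_range_smul_eq (F := fun j => dunklPoly α (F (j + 1))) hc fun n => ?_) n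
  calc ∑ j ∈ range (n + 1), c (n - j) • dunklPoly α (F (j + 1))
      = dunklPolyₗ α (∑ j ∈ range (n + 1 + 1), c (n + 1 - j) • F j) := by
        rw [sum_range_succ' _ (n + 1), map_add, map_smul, dunklPolyₗ_apply (F 0), hF0, smul_zero,
          add_zero, map_sum]
        simp only [map_smul, dunklPolyₗ_apply, Nat.add_sub_add_right]
    _ = ∑ j ∈ range (n + 1), c (n - j) • F j := by
        rw [hF, map_smul, dunklPolyₗ_apply, dunklPoly_inv_gamDunkl_smul_X_pow_succ hα, hF]

theorem dunklPoly_succ_eq_of_sum_range_eval (hα : ∀ k : ℕ, α + 1 ≠ -k) {c : ℕ → ℂ}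
    (hc : c 0 ≠ 0) {s : ℂ} {E : ℕ → ℂ[X]}
    (hE : ∀ x n, ∑ j ∈ range (n + 1), (E j).eval x / gamDunkl α j * c (n - j)
      = s * x ^ n / gamDunkl α n) (n : ℕ) :
    dunklPoly α (E (n + 1)) =
      C (((n + 1 : ℕ) : ℂ) + (α + 1 / 2) * (1 - (-1) ^ (n + 1))) * E n := by
  have hF (n : ℕ) : ∑ j ∈ range (n + 1), c (n - j) • (gamDunkl α j)⁻¹ • E j
      = s • (gamDunkl α n)⁻¹ • X ^ n := by
    refine Polynomial.funext fun x => ?_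
    simp only [eval_finsetSum, eval_smul, smul_eq_mul, eval_pow, eval_X]
    exact (sum_congr rfl fun j _ => by ring).trans ((hE x n).trans (by ring))
  have h := dunklPoly_succ_eq_of_sum_range_smul hα hc hF n
  rw [← dunklPolyₗ_apply, map_smul, dunklPolyₗ_apply, inv_smul_eq_iff₀ (gamDunkl_ne_zero hα _),
    smul_smul, gamDunkl_succ, mul_assoc, mul_inv_cancel₀ (gamDunkl_ne_zero hα n), mul_one,
    smul_eq_C_mul] at h
  exact h

end Dunkl

/-- **Properties of the Apostol–Euler–Dunkl polynomials**, defined by the generating identity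
`u𝕀_{α+1}(u)E_α(xt)/((t+u)𝕀_{α+1}(t+u)) = ∑ 𝔈_{n,α,u}(x) tⁿ/γ_{n,α}`: the recurrence
`xⁿ = (2(1+α)γ_{n,α}/(u𝕀_{α+1}(u))) ∑_{j=0}^n (𝔈_{j,α,u}(x)/(γ_{j,α}(n-j)!)) 𝕀_α^{(n-j+1)}(u)`
and `Λ_α 𝔈_n = (n + (α+1/2)(1-(-1)ⁿ)) 𝔈_{n-1}` for `n ≥ 1`. -/
theorem apostol_euler_dunkl_properties (α : ℂ) (hα : ∀ n : ℕ, α ≠ -((n:ℂ) + 1))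
    (u : ℂ) (hu0 : u ≠ 0) (hu : modI (α+1) u ≠ 0)
    (E : ℕ → Polynomial ℂ)
    (hE : ∀ x : ℂ, ∃ r > 0, ∀ t : ℂ, ‖t‖ < r →
      HasSum (fun n : ℕ => (E n).eval x * t^n / gamDunkl α n)
        (u * modI (α+1) u * dunklKer α (x*t) / ((t+u) * modI (α+1) (t+u)))) :
    (∀ n : ℕ, ∀ x : ℂ,
      x^n = 2*(1+α) * gamDunkl α n / (u * modI (α+1) u) *
        ∑ j ∈ Finset.range (n+1),
          (E j).eval x / (gamDunkl α j * (Nat.factorial (n-j) : ℂ))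
            * iteratedDeriv (n-j+1) (modI α) u)
    ∧ (∀ n : ℕ, 1 ≤ n →
      dunklPoly α (E n) = Polynomial.C ((n:ℂ) + (α + 1/2) * (1 - (-1)^n)) * E (n-1)) := by
  have hα' : ∀ k : ℕ, α + 1 ≠ -k := fun k h => hα k (by linear_combination h)
  have hα1 : α + 1 ≠ 0 := by simpa using hα' 0
  have hconv := sum_range_eval_div_gamDunkl_mul_iteratedDeriv hα' hu0 hu hE
  refine ⟨fun n x => ?_, fun n hn => ?_⟩
  · have hsum : ∑ j ∈ range (n + 1), (E j).eval x / (gamDunkl α j * (n - j)!)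
          * iteratedDeriv (n - j + 1) (modI α) u
        = (2 * (α + 1))⁻¹ * (u * modI (α + 1) u * x ^ n / gamDunkl α n) := by
      rw [← hconv x n, mul_sum]
      exact sum_congr rfl fun j _ => by field_simp
    have := gamDunkl_ne_zero hα' n
    rw [hsum]
    field_simp
    ring
  · obtain ⟨m, rfl⟩ := Nat.exists_eq_add_of_le' hn
    have hc0 : 2 * (α + 1) * iteratedDeriv 1 (modI α) u / (0 ! : ℂ) ≠ 0 := by
      rw [iteratedDeriv_one, deriv_modI hα', Nat.factorial_zero, Nat.cast_one, div_one]
      field_simp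
      exact mul_ne_zero hu0 hu
    exact dunklPoly_succ_eq_of_sum_range_eval hα'
      (c := fun m => 2 * (α + 1) * iteratedDeriv (m + 1) (modI α) u / m !) hc0 hconv m
end

section
/- Let α ∈ ℂ ∖ {−1,−2,…} and let P_k, Q_k be the rational functions defined by P_0(z) = 1, Q_0(z) = 0, P_{k+1}(z) = P_k′(z) + (2(α+1)/z)·Q_k(z), Q_{k+1}(z) = Q_k′(z) + (z/(2(α+1)))·P_k(z) − (2(α+1)/z)·Q_k(z). (i) If s ≠ 0 satisfies 𝕀_{α+1}(is) = 0, then 𝕀_α^{(k)}(is) = 𝕀_α(is) P_k(is) for every k ≥ 0. (ii) If j ≠ 0 satisfies 𝕀_α(ij) = 0, then 𝕀_α^{(k)}(ij) = 𝕀_{α+1}(ij) Q_k(ij) for every k ≥ 0. Moreover P_1(z) = 0, P_2(z) = 1, P_3(z) = −(2α+1)/z, P_4(z) = (2α+1)(2α+3)/z² + 1, Q_1(z) = z/(2(α+1)), Q_2(z) = −(2α+1)/(2(α+1)), Q_3(z) = z/(2(α+1)) + (2α+1)/z, and Q_4(z) = −(1+2α)(1/(1+α) + (3+2α)/z²). 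-/
/-!
Write `𝕀_α(z) = Γ(α+1) F_α(z²/4)` with the entire series `F_α(w) = ∑ wⁿ / (n! Γ(n+α+1))`.
Term-by-term, `F_α' = F_{α+1}` and `F_α - (α+1) F_{α+1} = w F_{α+2}`, which give
`𝕀_α' = z/(2(α+1)) 𝕀_{α+1}` and, for `z ≠ 0`, `𝕀_{α+1}' = 2(α+1)/z (𝕀_α - 𝕀_{α+1})`.
Differentiating `P_k 𝕀_α + Q_k 𝕀_{α+1}` with these two rules produces exactly the recursion
defining `(P_{k+1}, Q_{k+1})`, so `𝕀_α^{(k)} = P_k 𝕀_α + Q_k 𝕀_{α+1}` on `ℂ ∖ {0}`; at a zero of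
`𝕀_{α+1}` (resp. `𝕀_α`) one of the two terms drops out.
-/

open Complex Polynomial Finset Filter Topology

/-- The pair of rational functions `(P_k, Q_k)`:
`P_0 = 1`, `Q_0 = 0`, `P_{k+1} = P_k' + (2(α+1)/z) Q_k`,
`Q_{k+1} = Q_k' + (z/(2(α+1))) P_k - (2(α+1)/z) Q_k`. -/
noncomputable def dunklPQ (α : ℂ) : ℕ → (ℂ → ℂ) × (ℂ → ℂ)
  | 0 => (fun _ => 1, fun _ => 0)
  | k+1 =>
      (fun z => deriv (dunklPQ α k).1 z + 2*(α+1)/z * (dunklPQ α k).2 z,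
       fun z => deriv (dunklPQ α k).2 z + z/(2*(α+1)) * (dunklPQ α k).1 z
                  - 2*(α+1)/z * (dunklPQ α k).2 z)

open Set
open scoped Nat

noncomputable def besselDenom (α : ℂ) (n : ℕ) : ℂ := n ! * Gamma (n + α + 1)

noncomputable def besselSeries (α w : ℂ) : ℂ := ∑' n, w ^ n / besselDenom α n

theorem besselDenom_succ (α : ℂ) (n : ℕ) :
    besselDenom α (n + 1) = (n + 1) * besselDenom (α + 1) n := by
  simp only [besselDenom, Nat.factorial_succ]
  push_cast
  ring_nf

theorem modI_eq_besselSeries (α z : ℂ) :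
    modI α z = Gamma (α + 1) * besselSeries α ((z / 2) ^ 2) := by
  simp only [modI, besselSeries, besselDenom, pow_mul]

section Admissible

variable {α : ℂ} (hα : ∀ n : ℕ, α ≠ -((n : ℂ) + 1))
include hα

theorem add_one_ne_zero_of_forall_ne_neg : α + 1 ≠ 0 := fun h =>
  hα 0 (by push_cast; linear_combination h)

theorem add_two_ne_zero_of_forall_ne_neg : α + 2 ≠ 0 := fun h =>
  hα 1 (by push_cast; linear_combination h)

theorem natCast_add_add_one_ne_zero (n : ℕ) : (n : ℂ) + α + 1 ≠ 0 := fun h =>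
  hα n (by linear_combination h)

theorem add_one_ne_neg_natCast_add_one (n : ℕ) : α + 1 ≠ -((n : ℂ) + 1) := fun h =>
  hα (n + 1) (by push_cast; linear_combination h)

theorem besselDenom_ne_zero (n : ℕ) : besselDenom α n ≠ 0 := by
  refine mul_ne_zero (Nat.cast_ne_zero.2 n.factorial_ne_zero) (Gamma_ne_zero fun m h => ?_)
  exact hα (n + m) (by push_cast; linear_combination h)

theorem besselDenom_add_one (n : ℕ) :
    besselDenom (α + 1) n = (n + α + 1) * besselDenom α n := by
  rw [besselDenom, besselDenom, ← add_assoc, Gamma_add_one _ (natCast_add_add_one_ne_zero hα n)]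
  ring

theorem summable_norm_pow_div_besselDenom (w : ℂ) :
    Summable fun n => ‖w ^ n / besselDenom α n‖ := by
  refine summable_of_ratio_norm_eventually_le (r := 1 / 2) (by norm_num) ?_
  have hlarge : ∀ᶠ n : ℕ in atTop, ‖α + 1‖ + 2 * ‖w‖ + 1 ≤ n :=
    tendsto_natCast_atTop_atTop.eventually_ge_atTop _
  filter_upwards [hlarge] with n hn
  have hshift : (n : ℝ) - ‖α + 1‖ ≤ ‖(n : ℂ) + α + 1‖ := by
    have := norm_sub_norm_le (n : ℂ) (-(α + 1))
    rwa [sub_neg_eq_add, norm_neg, Complex.norm_natCast, ← add_assoc] at this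
  have hgrowth : 2 * ‖w‖ ≤ (n + 1) * ‖(n : ℂ) + α + 1‖ := by
    nlinarith [norm_nonneg (α + 1), norm_nonneg w]
  have hfactor :
      ‖besselDenom α (n + 1)‖ = (n + 1) * ‖(n : ℂ) + α + 1‖ * ‖besselDenom α n‖ := by
    rw [besselDenom_succ, besselDenom_add_one hα, norm_mul, norm_mul, ← Nat.cast_add_one,
      Complex.norm_natCast, Nat.cast_add_one, mul_assoc]
  have hpos : 0 < (n + 1) * ‖(n : ℂ) + α + 1‖ := by
    nlinarith [norm_nonneg (α + 1), norm_nonneg w]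
  calc ‖‖w ^ (n + 1) / besselDenom α (n + 1)‖‖
      = ‖w‖ / ((n + 1) * ‖(n : ℂ) + α + 1‖) * ‖w ^ n / besselDenom α n‖ := by
        rw [norm_norm, norm_div, norm_div, norm_pow, norm_pow, hfactor, pow_succ]
        field_simp
    _ ≤ 1 / 2 * ‖‖w ^ n / besselDenom α n‖‖ := by
        rw [norm_norm]
        gcongr ?_ * _
        rw [div_le_iff₀ hpos]
        linarith

theorem summable_pow_div_besselDenom (w : ℂ) : Summable fun n => w ^ n / besselDenom α n :=
  (summable_norm_pow_div_besselDenom hα w).of_norm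

theorem hasDerivAt_besselSeries (w : ℂ) :
    HasDerivAt (besselSeries α) (besselSeries (α + 1) w) w := by
  have hterm (n : ℕ) (y : ℂ) :
      HasDerivAt (fun y => y ^ n / besselDenom α n) (n * y ^ (n - 1) / besselDenom α n) y :=
    (hasDerivAt_pow n y).div_const _
  have hshift (n : ℕ) (y : ℂ) :
      ((n + 1 : ℕ) : ℂ) * y ^ (n + 1 - 1) / besselDenom α (n + 1)
        = y ^ n / besselDenom (α + 1) n := by
    rw [besselDenom_succ, Nat.add_sub_cancel, Nat.cast_add_one,
      mul_div_mul_left _ _ (Nat.cast_add_one_ne_zero n)]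
  have hα' := add_one_ne_neg_natCast_add_one hα
  set R : ℝ := ‖w‖ + 1
  have hbound (n : ℕ) (y : ℂ) (hy : y ∈ Metric.ball 0 R) :
      ‖n * y ^ (n - 1) / besselDenom α n‖ ≤ ‖n * (R : ℂ) ^ (n - 1) / besselDenom α n‖ := by
    rw [mem_ball_zero_iff] at hy
    simp only [norm_div, norm_mul, norm_pow, Complex.norm_real, Real.norm_eq_abs,
      abs_of_pos (by positivity : 0 < R)]
    gcongr
  have hsummable : Summable fun n : ℕ => ‖n * (R : ℂ) ^ (n - 1) / besselDenom α n‖ := by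
    rw [← summable_nat_add_iff 1]
    simpa only [hshift] using summable_norm_pow_div_besselDenom hα' R
  have hw : w ∈ Metric.ball 0 R := by simp [R]
  refine (hasDerivAt_tsum_of_isPreconnected hsummable Metric.isOpen_ball
    (convex_ball 0 R).isPreconnected (fun n y _ => hterm n y) hbound hw
    (summable_pow_div_besselDenom hα w) hw).congr_deriv ?_
  rw [tsum_eq_zero_add']
  · simp only [hshift, Nat.cast_zero, zero_mul, zero_div, zero_add, besselSeries]
  · simpa only [hshift] using summable_pow_div_besselDenom hα' w

theorem besselSeries_sub (w : ℂ) :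
    besselSeries α w - (α + 1) * besselSeries (α + 1) w = w * besselSeries (α + 2) w := by
  have hα' := add_one_ne_neg_natCast_add_one hα
  have hterm (n : ℕ) : w ^ n / besselDenom α n - (α + 1) * (w ^ n / besselDenom (α + 1) n)
      = n * (w ^ n / besselDenom (α + 1) n) := by
    have := besselDenom_ne_zero hα n
    have := natCast_add_add_one_ne_zero hα n
    rw [besselDenom_add_one hα]
    field_simp
    ring
  have hsummable : Summable fun n : ℕ => (n : ℂ) * (w ^ n / besselDenom (α + 1) n) :=
    (((summable_pow_div_besselDenom hα w).sub
      ((summable_pow_div_besselDenom hα' w).mul_left (α + 1)))).congr hterm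
  rw [besselSeries, besselSeries, ← tsum_mul_left,
    ← (summable_pow_div_besselDenom hα w).tsum_sub
      ((summable_pow_div_besselDenom hα' w).mul_left (α + 1)),
    tsum_congr hterm, hsummable.tsum_eq_zero_add, besselSeries, ← tsum_mul_left]
  simp only [Nat.cast_zero, zero_mul, zero_add]
  refine tsum_congr fun n => ?_
  rw [besselDenom_succ, show α + 1 + 1 = α + 2 by ring, pow_succ, Nat.cast_add_one]
  field_simp [Nat.cast_add_one_ne_zero n]

theorem hasDerivAt_modI (z : ℂ) :
    HasDerivAt (modI α) (z / (2 * (α + 1)) * modI (α + 1) z) z := by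
  have hα₀ := add_one_ne_zero_of_forall_ne_neg hα
  have hsq : HasDerivAt (fun z : ℂ => (z / 2) ^ 2) (z / 2) z := by
    refine (((hasDerivAt_id' z).div_const 2).fun_pow 2).congr_deriv ?_
    ring
  have hcomp := ((hasDerivAt_besselSeries hα _).comp z hsq).const_mul (Gamma (α + 1))
  refine (hcomp.congr_of_eventuallyEq (.of_forall (modI_eq_besselSeries α))).congr_deriv ?_
  rw [modI_eq_besselSeries, Gamma_add_one _ hα₀]
  field_simp

theorem modI_sub_modI_add_one (z : ℂ) :
    modI α z - modI (α + 1) z = z ^ 2 / (4 * (α + 1) * (α + 2)) * modI (α + 2) z := by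
  have hα₀ := add_one_ne_zero_of_forall_ne_neg hα
  have hα₁ := add_two_ne_zero_of_forall_ne_neg hα
  have hGamma : Gamma (α + 2 + 1) = (α + 2) * (α + 1) * Gamma (α + 1) := by
    rw [Gamma_add_one _ hα₁, show α + 2 = α + 1 + 1 by ring, Gamma_add_one _ hα₀]
    ring
  have hsq : z ^ 2 = 4 * (z / 2) ^ 2 := by ring
  rw [modI_eq_besselSeries, modI_eq_besselSeries, modI_eq_besselSeries, hGamma,
    Gamma_add_one _ hα₀, hsq]
  generalize (z / 2) ^ 2 = w
  field_simp
  linear_combination Gamma (α + 1) * besselSeries_sub hα w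

theorem hasDerivAt_modI_add_one {z : ℂ} (hz : z ≠ 0) :
    HasDerivAt (modI (α + 1)) (2 * (α + 1) / z * (modI α z - modI (α + 1) z)) z := by
  have hα₀ := add_one_ne_zero_of_forall_ne_neg hα
  have hα₁ := add_two_ne_zero_of_forall_ne_neg hα
  refine (hasDerivAt_modI (add_one_ne_neg_natCast_add_one hα) z).congr_deriv ?_
  rw [modI_sub_modI_add_one hα, add_assoc, one_add_one_eq_two]
  field_simp
  ring

end Admissible

theorem dunklPQ_succ_fst (α : ℂ) (k : ℕ) (z : ℂ) :
    (dunklPQ α (k + 1)).1 z = deriv (dunklPQ α k).1 z + 2 * (α + 1) / z * (dunklPQ α k).2 z :=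
  rfl

theorem dunklPQ_succ_snd (α : ℂ) (k : ℕ) (z : ℂ) :
    (dunklPQ α (k + 1)).2 z = deriv (dunklPQ α k).2 z + z / (2 * (α + 1)) * (dunklPQ α k).1 z
      - 2 * (α + 1) / z * (dunklPQ α k).2 z :=
  rfl

theorem differentiableOn_dunklPQ (α : ℂ) (k : ℕ) :
    DifferentiableOn ℂ (dunklPQ α k).1 {0}ᶜ ∧ DifferentiableOn ℂ (dunklPQ α k).2 {0}ᶜ := by
  induction k with
  | zero => exact ⟨differentiableOn_const _, differentiableOn_const _⟩
  | succ k ih =>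
    obtain ⟨hP, hQ⟩ := ih
    have hinv : DifferentiableOn ℂ (fun z : ℂ => 2 * (α + 1) / z) {0}ᶜ :=
      (differentiableOn_const _).div differentiableOn_id fun _ => id
    have hlin : DifferentiableOn ℂ (fun z : ℂ => z / (2 * (α + 1))) {0}ᶜ :=
      differentiableOn_id.div_const _
    have hP' := hP.deriv isOpen_compl_singleton
    have hQ' := hQ.deriv isOpen_compl_singleton
    exact ⟨hP'.add (hinv.mul hQ), (hQ'.add (hlin.mul hP)).sub (hinv.mul hQ)⟩

theorem iteratedDeriv_modI_eq {α : ℂ} (hα : ∀ n : ℕ, α ≠ -((n : ℂ) + 1)) (k : ℕ) {z : ℂ}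
    (hz : z ≠ 0) : iteratedDeriv k (modI α) z
      = (dunklPQ α k).1 z * modI α z + (dunklPQ α k).2 z * modI (α + 1) z := by
  induction k generalizing z with
  | zero => simp [dunklPQ]
  | succ k ih =>
    have hα₀ := add_one_ne_zero_of_forall_ne_neg hα
    obtain ⟨hP, hQ⟩ := differentiableOn_dunklPQ α k
    have hnhds : {0}ᶜ ∈ 𝓝 z := isOpen_compl_singleton.mem_nhds hz
    have hderiv :=
      ((hP.differentiableAt hnhds).hasDerivAt.fun_mul (hasDerivAt_modI hα z)).fun_add
        ((hQ.differentiableAt hnhds).hasDerivAt.fun_mul (hasDerivAt_modI_add_one hα hz))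
    rw [iteratedDeriv_succ, (Filter.eventuallyEq_of_mem hnhds fun w hw => ih hw).deriv_eq,
      hderiv.deriv, dunklPQ_succ_fst, dunklPQ_succ_snd]
    field_simp
    ring

theorem dunklPQ_one (α : ℂ) : dunklPQ α 1 = (fun _ => 0, fun z => z / (2 * (α + 1))) := by
  simp [dunklPQ]

section ExplicitValues

variable {α : ℂ} (hα₀ : α + 1 ≠ 0)
include hα₀

theorem eqOn_dunklPQ_two :
    EqOn (dunklPQ α 2).1 (fun _ => 1) {0}ᶜ
      ∧ EqOn (dunklPQ α 2).2 (fun _ => -(2 * α + 1) / (2 * (α + 1))) {0}ᶜ := by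
  refine ⟨fun z (hz : z ≠ 0) => ?_, fun z (hz : z ≠ 0) => ?_⟩ <;>
  · simp only [dunklPQ_succ_fst, dunklPQ_succ_snd, dunklPQ_one, deriv_const', deriv_div_const,
      deriv_id'']
    field_simp
    ring

theorem eqOn_dunklPQ_three :
    EqOn (dunklPQ α 3).1 (fun z => -(2 * α + 1) / z) {0}ᶜ
      ∧ EqOn (dunklPQ α 3).2 (fun z => z / (2 * (α + 1)) + (2 * α + 1) / z) {0}ᶜ := by
  obtain ⟨hP, hQ⟩ := eqOn_dunklPQ_two hα₀
  refine ⟨fun z (hz : z ≠ 0) => ?_, fun z (hz : z ≠ 0) => ?_⟩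
  · rw [dunklPQ_succ_fst, hP.deriv isOpen_compl_singleton hz, hQ hz, deriv_const]
    field_simp
    ring
  · rw [dunklPQ_succ_snd, hQ.deriv isOpen_compl_singleton hz, hP hz, hQ hz, deriv_const]
    field_simp
    ring

theorem eqOn_dunklPQ_four :
    EqOn (dunklPQ α 4).1 (fun z => (2 * α + 1) * (2 * α + 3) / z ^ 2 + 1) {0}ᶜ
      ∧ EqOn (dunklPQ α 4).2
          (fun z => -(1 + 2 * α) * (1 / (1 + α) + (3 + 2 * α) / z ^ 2)) {0}ᶜ := by
  obtain ⟨hP, hQ⟩ := eqOn_dunklPQ_three hα₀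
  have hα₀' : 1 + α ≠ 0 := by rwa [add_comm]
  refine ⟨fun z (hz : z ≠ 0) => ?_, fun z (hz : z ≠ 0) => ?_⟩
  · rw [dunklPQ_succ_fst, hP.deriv isOpen_compl_singleton hz, hQ hz, deriv_const_div_id]
    field_simp
    ring
  · rw [dunklPQ_succ_snd, hQ.deriv isOpen_compl_singleton hz, hP hz, hQ hz,
      deriv_fun_add (by fun_prop) (by fun_prop (disch := exact hz)), deriv_div_const, deriv_id'',
      deriv_const_div_id]
    field_simp
    ring

end ExplicitValues

/-- **Derivatives of `𝕀_α` at zeros of Bessel functions:**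
(i) if `s ≠ 0` and `𝕀_{α+1}(is) = 0` then `𝕀_α^{(k)}(is) = 𝕀_α(is) P_k(is)`;
(ii) if `j ≠ 0` and `𝕀_α(ij) = 0` then `𝕀_α^{(k)}(ij) = 𝕀_{α+1}(ij) Q_k(ij)`;
together with the explicit values of `P_1, …, P_4` and `Q_1, …, Q_4`. -/
theorem iteratedDeriv_modI_at_zeros (α : ℂ) (hα : ∀ n : ℕ, α ≠ -((n:ℂ) + 1)) :
    (∀ s : ℂ, s ≠ 0 → modI (α+1) (Complex.I * s) = 0 → ∀ k : ℕ,
      iteratedDeriv k (modI α) (Complex.I * s)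
        = modI α (Complex.I * s) * (dunklPQ α k).1 (Complex.I * s))
    ∧ (∀ j : ℂ, j ≠ 0 → modI α (Complex.I * j) = 0 → ∀ k : ℕ,
      iteratedDeriv k (modI α) (Complex.I * j)
        = modI (α+1) (Complex.I * j) * (dunklPQ α k).2 (Complex.I * j))
    ∧ (∀ z : ℂ, z ≠ 0 →
      (dunklPQ α 1).1 z = 0
      ∧ (dunklPQ α 2).1 z = 1
      ∧ (dunklPQ α 3).1 z = -(2*α+1)/z
      ∧ (dunklPQ α 4).1 z = (2*α+1)*(2*α+3)/z^2 + 1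
      ∧ (dunklPQ α 1).2 z = z/(2*(α+1))
      ∧ (dunklPQ α 2).2 z = -(2*α+1)/(2*(α+1))
      ∧ (dunklPQ α 3).2 z = z/(2*(α+1)) + (2*α+1)/z
      ∧ (dunklPQ α 4).2 z = -(1+2*α) * (1/(1+α) + (3+2*α)/z^2)) := by
  have hα₀ := add_one_ne_zero_of_forall_ne_neg hα
  obtain ⟨hP₂, hQ₂⟩ := eqOn_dunklPQ_two hα₀
  obtain ⟨hP₃, hQ₃⟩ := eqOn_dunklPQ_three hα₀
  obtain ⟨hP₄, hQ₄⟩ := eqOn_dunklPQ_four hα₀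
  refine ⟨fun s hs h0 k => ?_, fun j hj h0 k => ?_, fun z hz => ?_⟩
  · rw [iteratedDeriv_modI_eq hα k (mul_ne_zero I_ne_zero hs), h0]
    ring
  · rw [iteratedDeriv_modI_eq hα k (mul_ne_zero I_ne_zero hj), h0]
    ring
  · rw [dunklPQ_one]
    exact ⟨rfl, hP₂ hz, hP₃ hz, hP₄ hz, rfl, hQ₂ hz, hQ₃ hz, hQ₄ hz⟩
end
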